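/- arXiv:1801.06612 — 4 statements merged into one kernel-verified Lean document; each statement's English description precedes it below -/
import Mathlib

section
/- Let a, b be nonnegative real numbers and q, r, s real numbers with 0 ≤ q, r, s ≤ 1 such that the symmetric matrix [[1,q,r],[q,1,s],[r,s,1]] is positive semidefinite, and suppose s ≥ 0. Then for any real constant c with 0 < c ≤ √2, one has a²(1 - q²) + a·b·((3/2)·s - c·q·r) + (b²/2)·(1 - r²) ≥ 0. -/
/-- Algebraic core of the monotonicity formula: for nonnegative `a, b`,
`q, r, s ∈ [0,1]` with the Gram-type matrix positive semidefinite, `s ≥ 0`, and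
`0 < c ≤ √2`, the quadratic form `a²(1-q²) + ab((3/2)s - c q r) + (b²/2)(1-r²)`
is nonnegative. -/
theorem quadratic_form_nonneg_of_psd (a b q r s c : ℝ)
    (ha : 0 ≤ a) (hb : 0 ≤ b)
    (hq0 : 0 ≤ q) (hq1 : q ≤ 1)
    (hr0 : 0 ≤ r) (hr1 : r ≤ 1)
    (hs0 : 0 ≤ s) (hs1 : s ≤ 1)
    (hpsd : (!![1, q, r; q, 1, s; r, s, 1] : Matrix (Fin 3) (Fin 3) ℝ).PosSemidef)
    (hc0 : 0 < c) (hc2 : c ≤ Real.sqrt 2) :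
    0 ≤ a ^ 2 * (1 - q ^ 2) + a * b * ((3 / 2) * s - c * q * r)
      + (b ^ 2 / 2) * (1 - r ^ 2) := by
  have hQ : ∀ u : ℝ, 0 ≤ (1 - q ^ 2) * (u * u) + (2 * (s - q * r)) * u + (1 - r ^ 2) := by
    intro u
    have h := hpsd.dotProduct_mulVec_nonneg ![-(q * u + r), u, 1]
    simp [Matrix.mulVec, dotProduct, Fin.sum_univ_three] at h
    nlinarith [h]
  have hdisc : discrim (1 - q ^ 2) (2 * (s - q * r)) (1 - r ^ 2) ≤ 0 := discrim_le_zero hQ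
  rw [discrim] at hdisc
  have hdet : (s - q * r) ^ 2 ≤ (1 - q ^ 2) * (1 - r ^ 2) := by nlinarith [hdisc]
  have hX : (0:ℝ) ≤ 1 - q ^ 2 := by nlinarith
  have hY : (0:ℝ) ≤ 1 - r ^ 2 := by nlinarith
  have hXY : (0:ℝ) ≤ (1 - q ^ 2) * (1 - r ^ 2) := mul_nonneg hX hY
  obtain ⟨d, hddef⟩ : ∃ d, d = Real.sqrt ((1 - q ^ 2) * (1 - r ^ 2)) := ⟨_, rfl⟩
  have hd0 : 0 ≤ d := hddef ▸ Real.sqrt_nonneg _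
  have hd2 : d ^ 2 = (1 - q ^ 2) * (1 - r ^ 2) := by rw [hddef]; exact Real.sq_sqrt hXY
  have hsq : (s - q * r) ^ 2 ≤ d ^ 2 := by rw [hd2]; exact hdet
  have hs_lb : q * r - d ≤ s := by nlinarith [hsq, hd0]
  have h2 : (0:ℝ) ≤ 2 := by norm_num
  have hsqrt2 : Real.sqrt 2 ^ 2 = 2 := Real.sq_sqrt h2
  have hsqrt2nn : 0 ≤ Real.sqrt 2 := Real.sqrt_nonneg 2
  have h32 : Real.sqrt 2 ≤ 3 / 2 := by nlinarith [hsqrt2, hsqrt2nn]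
  have hm : c * q * r - (3 / 2) * s ≤ Real.sqrt 2 * d := by
    rcases le_or_gt (q * r) d with h | h
    · nlinarith [mul_nonneg hq0 hr0, hs0, hc2, hsqrt2nn, hc0.le]
    · nlinarith [hs_lb, hc2, h32, hd0]
  have hxy : Real.sqrt (1 - q ^ 2) * Real.sqrt (1 - r ^ 2) = d := by
    rw [hddef]; exact (Real.sqrt_mul hX _).symm
  have key : Real.sqrt 2 * d * (a * b)
      ≤ a ^ 2 * (1 - q ^ 2) + b ^ 2 / 2 * (1 - r ^ 2) := by
    have hx2 : Real.sqrt (1 - q ^ 2) ^ 2 = 1 - q ^ 2 := Real.sq_sqrt hX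
    have hy2 : Real.sqrt (1 - r ^ 2) ^ 2 = 1 - r ^ 2 := Real.sq_sqrt hY
    have h0 := sq_nonneg (a * Real.sqrt 2 * Real.sqrt (1 - q ^ 2) - b * Real.sqrt (1 - r ^ 2))
    have expand : (a * Real.sqrt 2 * Real.sqrt (1 - q ^ 2) - b * Real.sqrt (1 - r ^ 2)) ^ 2
        = 2 * (a ^ 2 * (1 - q ^ 2)) + b ^ 2 * (1 - r ^ 2)
          - 2 * Real.sqrt 2 * (Real.sqrt (1 - q ^ 2) * Real.sqrt (1 - r ^ 2)) * (a * b) := by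
      linear_combination (a ^ 2 * Real.sqrt (1 - q ^ 2) ^ 2) * hsqrt2
        + 2 * a ^ 2 * hx2 + b ^ 2 * hy2
    rw [expand, hxy] at h0
    linarith only [h0]
  have hab : 0 ≤ a * b := mul_nonneg ha hb
  have h1 : a * b * (c * q * r - (3 / 2) * s) ≤ a * b * (Real.sqrt 2 * d) :=
    mul_le_mul_of_nonneg_left hm hab
  have hfin : a * b * (c * q * r - (3 / 2) * s)
      ≤ a ^ 2 * (1 - q ^ 2) + b ^ 2 / 2 * (1 - r ^ 2) := by
    refine le_trans h1 ?_
    calc a * b * (Real.sqrt 2 * d) = Real.sqrt 2 * d * (a * b) := by ring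
      _ ≤ _ := key
  linarith only [hfin]
end

section
/- Let q, r ∈ [0,1] and s ∈ ℝ satisfy (s - q·r)² ≤ (1 - q²)(1 - r²) and s ≥ 0. Then (√2)·q·r - (3/2)·s ≤ √(2·(1 - q²)·(1 - r²)). -/
/-- Discriminant condition: for `q, r ∈ [0,1]` and `s ∈ ℝ` with
`(s - qr)² ≤ (1-q²)(1-r²)` and `s ≥ 0`, one has
`√2·q·r − (3/2)·s ≤ √(2(1-q²)(1-r²))`. -/
theorem discriminant_condition (q r s : ℝ)
    (hq0 : 0 ≤ q) (hq1 : q ≤ 1)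
    (hr0 : 0 ≤ r) (hr1 : r ≤ 1)
    (h : (s - q * r) ^ 2 ≤ (1 - q ^ 2) * (1 - r ^ 2))
    (hs : 0 ≤ s) :
    Real.sqrt 2 * q * r - (3 / 2) * s
      ≤ Real.sqrt (2 * (1 - q ^ 2) * (1 - r ^ 2)) := by
  set D := Real.sqrt ((1 - q ^ 2) * (1 - r ^ 2)) with hD
  have hDnn : 0 ≤ D := Real.sqrt_nonneg _
  have h1 : q * r - s ≤ D := by
    have habs : |s - q * r| ≤ D := by
      rw [hD]
      have := Real.sqrt_le_sqrt h
      rwa [Real.sqrt_sq_eq_abs] at this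
    have : q * r - s ≤ |s - q * r| := by
      rw [abs_sub_comm]; exact le_abs_self _
    linarith
  have hsqrt2 : Real.sqrt 2 ≤ 3 / 2 := by
    rw [show (3:ℝ)/2 = Real.sqrt ((3/2)^2) by rw [Real.sqrt_sq]; norm_num]
    apply Real.sqrt_le_sqrt; norm_num
  have h2 : Real.sqrt 2 * (q * r - s) ≤ Real.sqrt 2 * D :=
    mul_le_mul_of_nonneg_left h1 (Real.sqrt_nonneg 2)
  have h3 : Real.sqrt (2 * (1 - q ^ 2) * (1 - r ^ 2)) = Real.sqrt 2 * D := by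
    rw [hD, mul_assoc, Real.sqrt_mul (by norm_num)]
  rw [h3]
  nlinarith [Real.sqrt_nonneg 2]
end

section
/- For a smooth compactly supported (or Schwartz) function Q on ℝ and Schwartz u, the commutator of the Hilbert transform with multiplication by Q satisfies the integral representation ([𝓗, Q]u)(y) = −(1/π)·∫₀¹ ∫_ℝ Q'(r·z + (1−r)·y)·u(z) dz dr. -/
open MeasureTheory Real Set Filter

lemma diffquot {f : ℝ → ℝ} (hf : ContDiff ℝ (⊤:ℕ∞) f) (y z : ℝ) :
    f z - f y = (z - y) * ∫ r in (0:ℝ)..1, deriv f (r * z + (1 - r) * y) := by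
  have hd : Differentiable ℝ f := hf.differentiable (by simp)
  have hc : Continuous (deriv f) := hf.continuous_deriv (by simp)
  have key : ∀ r ∈ Set.uIcc (0:ℝ) 1, HasDerivAt (fun r : ℝ => f (r * z + (1 - r) * y))
      (deriv f (r * z + (1 - r) * y) * (z - y)) r := by
    intro r _
    have h1 : HasDerivAt (fun r : ℝ => r * z + (1 - r) * y) (z - y) r := by
      have := ((hasDerivAt_id r).mul_const z).add
        (((hasDerivAt_const r (1:ℝ)).sub (hasDerivAt_id r)).mul_const y)
      exact this.congr_deriv (by ring)
    exact ((hd _).hasDerivAt).comp r h1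
  have hint : IntervalIntegrable (fun r => deriv f (r * z + (1 - r) * y) * (z - y)) volume 0 1 :=
    ((hc.comp (by continuity)).mul continuous_const).intervalIntegrable _ _
  have h2 := intervalIntegral.integral_eq_sub_of_hasDerivAt key hint
  simp only [one_mul, zero_mul] at h2
  rw [intervalIntegral.integral_mul_const] at h2
  rw [show (z + (1 - 1) * y) = z by ring, show ((0:ℝ) + (1 - 0) * y) = y by ring] at h2
  linarith [h2]

lemma measSet (y ε : ℝ) : MeasurableSet {z : ℝ | ε < |y - z|} :=
  measurableSet_lt measurable_const ((measurable_const.sub measurable_id).abs)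

lemma integrableOn_div (y : ℝ) {f : ℝ → ℝ} (hfm : AEStronglyMeasurable f volume)
    (hfi : Integrable f) {ε : ℝ} (hε : 0 < ε) :
    IntegrableOn (fun z => f z / (y - z)) {z | ε < |y - z|} := by
  have hmeas : AEStronglyMeasurable (fun z => f z / (y - z)) volume :=
    (hfm.aemeasurable.div ((measurable_const.sub measurable_id).aemeasurable)).aestronglyMeasurable
  refine Integrable.mono' ((hfi.abs.const_mul ε⁻¹).integrableOn) hmeas.restrict ?_
  refine ae_restrict_of_forall_mem (measSet y ε) fun z hz => ?_
  have hz' : ε < |y - z| := hz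
  have h0 : (0:ℝ) < |y - z| := lt_trans hε hz'
  rw [Real.norm_eq_abs, abs_div]
  rw [div_le_iff₀ h0]
  calc |f z| = ε⁻¹ * |f z| * ε := by field_simp
    _ ≤ ε⁻¹ * |f z| * |y - z| := by
        apply mul_le_mul_of_nonneg_left hz'.le
        positivity

lemma squeezeLemma (y : ℝ) (h : ℝ → ℝ) (hi : Integrable h) (M : ℝ)
    (hM : ∀ z, |y - z| ≤ 1 → |h z| ≤ M) :
    Tendsto (fun ε => ∫ z in {z : ℝ | ε < |y - z|}, h z) (nhdsWithin 0 (Set.Ioi 0))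
      (nhds (∫ z, h z)) := by
  have hM0 : 0 ≤ M := le_trans (abs_nonneg _) (hM y (by simp))
  have key : ∀ ε ∈ Ioc (0:ℝ) 1,
      ‖(∫ z in {z : ℝ | ε < |y - z|}, h z) - ∫ z, h z‖ ≤ M * (2 * ε) := by
    intro ε hε
    have hsplit := integral_add_compl (measSet y ε) hi
    have hceq : ‖(∫ z in {z : ℝ | ε < |y - z|}, h z) - ∫ z, h z‖
        = ‖∫ z in {z : ℝ | ε < |y - z|}ᶜ, h z‖ := by
      rw [← hsplit]; rw [show ∀ a b : ℝ, a - (a + b) = -b from by intros; ring]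
      rw [norm_neg]
    rw [hceq]
    have hsub : {z : ℝ | ε < |y - z|}ᶜ ⊆ Icc (y - ε) (y + ε) := by
      intro z hz
      simp only [mem_compl_iff, mem_setOf_eq, not_lt] at hz
      rw [abs_le] at hz
      constructor <;> linarith [hz.1, hz.2]
    have hfin : volume {z : ℝ | ε < |y - z|}ᶜ < ⊤ :=
      lt_of_le_of_lt (measure_mono hsub) (by rw [Real.volume_Icc]; exact ENNReal.ofReal_lt_top)
    have hb := norm_setIntegral_le_of_norm_le_const (μ := volume) hfin
      (fun z hz => by
        have : |y - z| ≤ ε := by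
          simp only [mem_compl_iff, mem_setOf_eq, not_lt] at hz; exact hz
        exact hM z (le_trans this hε.2)) (f := h)
    refine le_trans hb ?_
    have : (volume {z : ℝ | ε < |y - z|}ᶜ).toReal ≤ 2 * ε := by
      have h1 : volume {z : ℝ | ε < |y - z|}ᶜ ≤ ENNReal.ofReal (2 * ε) := by
        refine le_trans (measure_mono hsub) ?_
        rw [Real.volume_Icc]
        apply le_of_eq; congr 1; ring
      calc (volume {z : ℝ | ε < |y - z|}ᶜ).toReal ≤ (ENNReal.ofReal (2 * ε)).toReal :=
            ENNReal.toReal_mono ENNReal.ofReal_ne_top h1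
        _ = 2 * ε := ENNReal.toReal_ofReal (by linarith [hε.1])
    exact mul_le_mul_of_nonneg_left this hM0
  have h0 : Tendsto (fun ε : ℝ => (∫ z in {z : ℝ | ε < |y - z|}, h z) - ∫ z, h z)
      (nhdsWithin 0 (Set.Ioi 0)) (nhds 0) := by
    apply squeeze_zero_norm'
    · filter_upwards [Ioc_mem_nhdsGT_of_mem (by simp : (0:ℝ) ∈ Ico (0:ℝ) 1)] with ε hε
      exact key ε hε
    · have : Tendsto (fun ε : ℝ => M * (2 * ε)) (nhds 0) (nhds (M * (2 * 0))) :=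
        (tendsto_id.const_mul 2).const_mul M
      simpa using this.mono_left nhdsWithin_le_nhds
  have := h0.add (tendsto_const_nhds (x := ∫ z, h z))
  simpa using this

lemma sym_zero (y : ℝ) {ε : ℝ} (hε : 0 < ε) :
    ∫ z in {z : ℝ | ε < |y - z|} ∩ {z : ℝ | |y - z| < 1}, (y - z)⁻¹ = 0 := by
  set T : Set ℝ := {w | ε < |w| ∧ |w| < 1} with hTdef
  have hT : MeasurableSet T :=
    (measurableSet_lt measurable_const measurable_abs).inter
      (measurableSet_lt measurable_abs measurable_const)
  set ψ : ℝ → ℝ := T.indicator (fun w => w⁻¹) with hψdef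
  have hS : MeasurableSet ({z : ℝ | ε < |y - z|} ∩ {z : ℝ | |y - z| < 1}) :=
    (measurableSet_lt measurable_const ((measurable_const.sub measurable_id).abs)).inter
      (measurableSet_lt ((measurable_const.sub measurable_id).abs) measurable_const)
  have h1 : ∀ z : ℝ, ψ (y - z)
      = ({z : ℝ | ε < |y - z|} ∩ {z : ℝ | |y - z| < 1}).indicator (fun z => (y - z)⁻¹) z := by
    intro z
    simp only [hψdef]
    by_cases hz : ε < |y - z| ∧ |y - z| < 1
    · rw [Set.indicator_of_mem (by exact hz : y - z ∈ T),
        Set.indicator_of_mem (by exact ⟨hz.1, hz.2⟩)]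
    · rw [Set.indicator_of_notMem (by exact hz : ¬ (y - z ∈ T)),
        Set.indicator_of_notMem (by simpa [Set.mem_inter_iff] using hz)]
  have hodd : ∀ w : ℝ, ψ (-w) = -ψ w := by
    intro w
    simp only [hψdef]
    by_cases hw : w ∈ T
    · have hw' : -w ∈ T := by simpa [hTdef, abs_neg] using hw
      rw [Set.indicator_of_mem hw', Set.indicator_of_mem hw]
      exact inv_neg
    · have hw' : ¬ (-w ∈ T) := by simpa [hTdef, abs_neg] using hw
      rw [Set.indicator_of_notMem hw', Set.indicator_of_notMem hw]; ring
  have h3 : ∫ w, ψ w = 0 := by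
    have hneg : ∫ w, ψ (-w) = ∫ w, ψ w := integral_neg_eq_self ψ volume
    have : ∫ w, (-ψ w) = ∫ w, ψ w := by
      rw [← hneg]; congr 1; ext w; rw [hodd]
    rw [integral_neg] at this
    linarith
  calc ∫ z in {z : ℝ | ε < |y - z|} ∩ {z : ℝ | |y - z| < 1}, (y - z)⁻¹
      = ∫ z, ({z : ℝ | ε < |y - z|} ∩ {z : ℝ | |y - z| < 1}).indicator (fun z => (y - z)⁻¹) z :=
        (integral_indicator hS).symm
    _ = ∫ z, ψ (y - z) := by simp only [← h1]
    _ = ∫ w, ψ w := integral_sub_left_eq_self ψ volume y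
    _ = 0 := h3

lemma measD (y : ℝ) : MeasurableSet {z : ℝ | |y - z| < 1} :=
  measurableSet_lt ((measurable_const.sub measurable_id).abs) measurable_const

lemma D_eq (y : ℝ) : {z : ℝ | |y - z| < 1} = Ioo (y - 1) (y + 1) := by
  ext z; simp only [mem_setOf_eq, mem_Ioo, abs_lt]
  constructor <;> intro h <;> constructor <;> linarith [h.1, h.2]

lemma volD (y : ℝ) : volume {z : ℝ | |y - z| < 1} < ⊤ := by
  rw [D_eq, Real.volume_Ioo]; exact ENNReal.ofReal_lt_top

lemma tendsto_pv (y : ℝ) (f : ℝ → ℝ) (hfm : AEStronglyMeasurable f volume)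
    (hfi : Integrable f) (g : ℝ → ℝ) (hgm : AEStronglyMeasurable g volume) (M : ℝ)
    (hgM : ∀ z, |g z| ≤ M) (hfg : ∀ z, f z - f y = (z - y) * g z) :
    Tendsto (fun ε => ∫ z in {z : ℝ | ε < |y - z|}, f z / (y - z))
      (nhdsWithin 0 (Set.Ioi 0))
      (nhds ((∫ z, ({z : ℝ | |y - z| < 1}).indicator (fun z => -g z) z)
          + ∫ z in {z : ℝ | |y - z| < 1}ᶜ, f z / (y - z))) := by
  set D := {z : ℝ | |y - z| < 1} with hDdef
  have hM0 : 0 ≤ M := le_trans (abs_nonneg _) (hgM y)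
  have hgD : IntegrableOn (fun z => -g z) D := by
    refine Integrable.mono' (g := fun _ => M) ?_ hgm.neg.restrict ?_
    · exact integrableOn_const (volD y).ne
    · exact Eventually.of_forall fun z => by simpa using hgM z
  have hh0 : Integrable (D.indicator fun z => -g z) :=
    (integrable_indicator_iff (measD y)).2 hgD
  -- the fixed tail term
  have htail : IntegrableOn (fun z => f z / (y - z)) Dᶜ := by
    refine (integrableOn_div y hfm hfi (by norm_num : (0:ℝ) < 1/2)).mono_set ?_
    intro z hz
    simp only [hDdef, mem_compl_iff, mem_setOf_eq, not_lt] at hz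
    simp only [mem_setOf_eq]; linarith
  have key : ∀ ε ∈ Ioo (0:ℝ) 1,
      ∫ z in {z : ℝ | ε < |y - z|}, f z / (y - z)
        = (∫ z in {z : ℝ | ε < |y - z|}, D.indicator (fun z => -g z) z)
          + ∫ z in Dᶜ, f z / (y - z) := by
    intro ε hε
    set S := {z : ℝ | ε < |y - z|} with hSdef
    have hIf : IntegrableOn (fun z => f z / (y - z)) S := integrableOn_div y hfm hfi hε.1
    have hsplit := integral_inter_add_diff (μ := volume) (f := fun z => f z / (y - z))
      (s := S) (measD y) hIf
    have hdiff : S \ D = Dᶜ := by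
      ext z
      simp only [hSdef, hDdef, mem_diff, mem_compl_iff, mem_setOf_eq, not_lt]
      constructor
      · exact fun h => h.2
      · exact fun h => ⟨lt_of_lt_of_le hε.2 h, h⟩
    rw [hdiff] at hsplit
    -- compute the near part
    have hnear : ∫ z in S ∩ D, f z / (y - z)
        = ∫ z in S ∩ D, (-g z + f y * (y - z)⁻¹) := by
      refine setIntegral_congr_fun ((measSet y ε).inter (measD y)) fun z hz => ?_
      have h0 : (0:ℝ) < |y - z| := lt_trans hε.1 hz.1
      have hyz : y - z ≠ 0 := by intro h; rw [h] at h0; simp at h0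
      have hfz : f z = f y + (z - y) * g z := by linarith [hfg z]
      rw [hfz]; field_simp; ring
    have hIg : IntegrableOn (fun z => -g z) (S ∩ D) := hgD.mono_set inter_subset_right
    have hIc : IntegrableOn (fun z => f y * (y - z)⁻¹) (S ∩ D) := by
      refine Integrable.mono' (g := fun _ => |f y| * ε⁻¹) ?_ ?_ ?_
      · exact integrableOn_const
          ((lt_of_le_of_lt (measure_mono inter_subset_right) (volD y))).ne
      · exact ((measurable_const.mul
          ((measurable_const.sub measurable_id).inv)).aestronglyMeasurable).restrict
      · refine ae_restrict_of_forall_mem ((measSet y ε).inter (measD y)) fun z hz => ?_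
        have h0 : (0:ℝ) < |y - z| := lt_trans hε.1 hz.1
        rw [Real.norm_eq_abs, abs_mul, abs_inv]
        refine mul_le_mul_of_nonneg_left ?_ (abs_nonneg _)
        rw [inv_le_inv₀ h0 hε.1]
        exact hz.1.le
    have hadd : ∫ z in S ∩ D, (-g z + f y * (y - z)⁻¹)
        = (∫ z in S ∩ D, -g z) + ∫ z in S ∩ D, f y * (y - z)⁻¹ :=
      integral_add hIg hIc
    have hzero : ∫ z in S ∩ D, f y * (y - z)⁻¹ = 0 := by
      rw [integral_const_mul, sym_zero y hε.1, mul_zero]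
    have hind : ∫ z in S, D.indicator (fun z => -g z) z = ∫ z in S ∩ D, -g z :=
      setIntegral_indicator (measD y)
    rw [← hsplit, hnear, hadd, hzero, add_zero, hind]
  have hlim : Tendsto (fun ε => (∫ z in {z : ℝ | ε < |y - z|}, D.indicator (fun z => -g z) z)
      + ∫ z in Dᶜ, f z / (y - z)) (nhdsWithin 0 (Set.Ioi 0))
      (nhds ((∫ z, D.indicator (fun z => -g z) z) + ∫ z in Dᶜ, f z / (y - z))) := by
    refine Tendsto.add ?_ tendsto_const_nhds
    refine squeezeLemma y _ hh0 M fun z _ => ?_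
    by_cases hz : z ∈ D
    · rw [Set.indicator_of_mem hz]; simpa using hgM z
    · rw [Set.indicator_of_notMem hz]; simpa using hM0
  refine Tendsto.congr' ?_ hlim
  filter_upwards [Ioo_mem_nhdsGT_of_mem (by simp : (0:ℝ) ∈ Ico (0:ℝ) 1)] with ε hε
  exact (key ε hε).symm

lemma schwartz_bound (u : SchwartzMap ℝ ℝ) : ∃ C, ∀ x, |u x| ≤ C := by
  obtain ⟨C, hC⟩ := u.decay 0 0
  exact ⟨C, fun x => by simpa [norm_iteratedFDeriv_zero] using hC.2 x⟩

lemma schwartz_deriv_bound (u : SchwartzMap ℝ ℝ) : ∃ C, ∀ x, |deriv u x| ≤ C := by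
  obtain ⟨C, hC⟩ := schwartz_bound (SchwartzMap.derivCLM ℝ ℝ u)
  exact ⟨C, fun x => by simpa [SchwartzMap.derivCLM_apply] using hC x⟩

lemma gFacts (y : ℝ) {f : ℝ → ℝ} (hf : ContDiff ℝ (⊤:ℕ∞) f) (M : ℝ)
    (hM : ∀ x, |deriv f x| ≤ M) :
    (∀ z, |(∫ r in (0:ℝ)..1, deriv f (r * z + (1 - r) * y))| ≤ M) ∧
    AEStronglyMeasurable (fun z => ∫ r in (0:ℝ)..1, deriv f (r * z + (1 - r) * y)) volume := by
  constructor
  · intro z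
    have h := intervalIntegral.norm_integral_le_of_norm_le_const (C := M)
      (f := fun r => deriv f (r * z + (1 - r) * y)) (a := (0:ℝ)) (b := 1)
      (fun r _ => by simpa [Real.norm_eq_abs] using hM _)
    simpa using h
  · have hae : ∀ᵐ z : ℝ, z ≠ y := by
      rw [ae_iff]
      simpa [not_not] using measure_singleton (α := ℝ) y
    refine AEStronglyMeasurable.congr
      (f := fun z => (f z - f y) / (z - y)) ?_ ?_
    · exact (((hf.continuous.measurable.sub measurable_const).div
        (measurable_id.sub measurable_const))).aestronglyMeasurable
    · filter_upwards [hae] with z hz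
      rw [diffquot hf y z]
      exact mul_div_cancel_left₀ _ (sub_ne_zero.2 hz)

lemma fubini_step (y : ℝ) (Q : ℝ → ℝ) (hQ : ContDiff ℝ (⊤:ℕ∞) Q) (MQ : ℝ)
    (hMQ : ∀ x, |deriv Q x| ≤ MQ) (u : SchwartzMap ℝ ℝ) :
    ∫ z, (∫ r in (0:ℝ)..1, deriv Q (r * z + (1 - r) * y)) * u z
      = ∫ r in (0:ℝ)..1, ∫ z, deriv Q (r * z + (1 - r) * y) * u z := by
  have hdc : Continuous (deriv Q) := hQ.continuous_deriv (by simp)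
  have hline : Continuous fun p : ℝ × ℝ => p.2 * p.1 + (1 - p.2) * y :=
    (continuous_snd.mul continuous_fst).add
      ((continuous_const.sub continuous_snd).mul continuous_const)
  have hcont : Continuous fun p : ℝ × ℝ => deriv Q (p.2 * p.1 + (1 - p.2) * y) * u p.1 :=
    (hdc.comp hline).mul (u.continuous.comp continuous_fst)
  have hMQ0 : 0 ≤ MQ := le_trans (abs_nonneg _) (hMQ 0)
  have hIoc : volume (Ioc (0:ℝ) 1) = 1 := by simp
  have huint : Integrable (fun z : ℝ => (u : ℝ → ℝ) z) volume := u.integrable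
  have hsl : ∀ z : ℝ, Continuous fun r : ℝ => deriv Q (r * z + (1 - r) * y) * u z :=
    fun z => (hdc.comp ((continuous_id.mul continuous_const).add
      ((continuous_const.sub continuous_id).mul continuous_const))).mul continuous_const
  have hInt : Integrable (fun p : ℝ × ℝ => deriv Q (p.2 * p.1 + (1 - p.2) * y) * u p.1)
      (volume.prod (volume.restrict (Ioc (0:ℝ) 1))) := by
    refine (integrable_prod_iff hcont.aestronglyMeasurable).2 ⟨?_, ?_⟩
    · exact Eventually.of_forall fun z => (hsl z).integrableOn_Ioc
    · have haesm : AEStronglyMeasurable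
          (fun z : ℝ => ∫ r in Ioc (0:ℝ) 1, ‖deriv Q (r * z + (1 - r) * y) * u z‖) volume :=
        hcont.norm.aestronglyMeasurable.integral_prod_right'
      refine Integrable.mono' ((huint.abs).const_mul MQ) haesm ?_
      refine Eventually.of_forall fun z => ?_
      rw [Real.norm_eq_abs, abs_of_nonneg (integral_nonneg fun r => norm_nonneg _)]
      have hb : ∫ r in Ioc (0:ℝ) 1, ‖deriv Q (r * z + (1 - r) * y) * u z‖
          ≤ ∫ _r in Ioc (0:ℝ) 1, MQ * |u z| := by
        refine setIntegral_mono_on ?_ ?_ measurableSet_Ioc fun r _ => ?_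
        · exact (hsl z).norm.integrableOn_Ioc
        · exact integrableOn_const (by rw [hIoc]; exact ENNReal.one_ne_top)
        · rw [Real.norm_eq_abs, abs_mul]
          exact mul_le_mul_of_nonneg_right (hMQ _) (abs_nonneg _)
      refine le_trans hb ?_
      rw [setIntegral_const, measureReal_def, hIoc]
      simp
  have hswap := integral_integral_swap
    (f := fun z r : ℝ => deriv Q (r * z + (1 - r) * y) * u z)
    (μ := volume) (ν := volume.restrict (Ioc (0:ℝ) 1)) hInt
  calc ∫ z, (∫ r in (0:ℝ)..1, deriv Q (r * z + (1 - r) * y)) * u z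
      = ∫ z, ∫ r in (0:ℝ)..1, deriv Q (r * z + (1 - r) * y) * u z := by
        congr 1; ext z; rw [intervalIntegral.integral_mul_const]
    _ = ∫ z, ∫ r in Ioc (0:ℝ) 1, deriv Q (r * z + (1 - r) * y) * u z := by
        congr 1; ext z; rw [intervalIntegral.integral_of_le zero_le_one]
    _ = ∫ r in Ioc (0:ℝ) 1, ∫ z, deriv Q (r * z + (1 - r) * y) * u z := hswap
    _ = ∫ r in (0:ℝ)..1, ∫ z, deriv Q (r * z + (1 - r) * y) * u z :=
        (intervalIntegral.integral_of_le zero_le_one).symm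

/-- The Hilbert transform on `ℝ`, defined as a principal value:
`(𝓗u)(y) = (1/π) lim_{ε→0⁺} ∫_{|y−z|>ε} u(z)/(y−z) dz`. -/
noncomputable def pvHilbert (u : ℝ → ℝ) (y : ℝ) : ℝ :=
  Filter.limUnder (nhdsWithin 0 (Set.Ioi 0)) fun ε =>
    (1 / Real.pi) * ∫ z in {z : ℝ | ε < |y - z|}, u z / (y - z)

/-- For smooth compactly supported `Q` and Schwartz `u`, the commutator of the
Hilbert transform with multiplication by `Q` satisfies
`([𝓗,Q]u)(y) = −(1/π)∫₀¹∫ Q'(rz+(1−r)y)·u(z) dz dr`. -/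
theorem hilbert_commutator_representation (Q : ℝ → ℝ)
    (hQ : ContDiff ℝ (⊤ : ℕ∞) Q) (hQsupp : HasCompactSupport Q)
    (u : SchwartzMap ℝ ℝ) (y : ℝ) :
    pvHilbert (fun z => Q z * u z) y - Q y * pvHilbert (⇑u) y
      = -(1 / Real.pi) *
          ∫ r in (0:ℝ)..1, ∫ z : ℝ, deriv Q (r * z + (1 - r) * y) * u z := by
  -- bounds
  have hQ' : ContDiff ℝ (⊤:ℕ∞) Q := hQ.of_le (by simp)
  obtain ⟨MQ, hMQ⟩ := hQsupp.exists_bound_of_continuous hQ'.continuous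
  obtain ⟨MQ', hMQ'⟩ := (hQsupp.deriv).exists_bound_of_continuous (hQ'.continuous_deriv (by simp))
  obtain ⟨Mu, hMu⟩ := schwartz_bound u
  obtain ⟨Mu', hMu'⟩ := schwartz_deriv_bound u
  have hMQ'abs : ∀ x, |deriv Q x| ≤ MQ' := fun x => by simpa using hMQ' x
  have hMQ'0 : 0 ≤ MQ' := le_trans (abs_nonneg _) (hMQ'abs 0)
  -- integrabilities
  have huint : Integrable (fun z : ℝ => (u : ℝ → ℝ) z) volume := u.integrable
  have hum : AEStronglyMeasurable (fun z : ℝ => (u : ℝ → ℝ) z) volume :=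
    u.continuous.aestronglyMeasurable
  have hQuint : Integrable (fun z : ℝ => Q z * u z) volume := by
    refine Integrable.mono' ((huint.abs).const_mul MQ)
      ((hQ'.continuous.mul u.continuous).aestronglyMeasurable) ?_
    refine Eventually.of_forall fun z => ?_
    rw [Real.norm_eq_abs, abs_mul]
    exact mul_le_mul_of_nonneg_right (by simpa using hMQ z) (abs_nonneg _)
  -- the g functions
  set gu : ℝ → ℝ := fun z => ∫ r in (0:ℝ)..1, deriv u (r * z + (1 - r) * y) with hgu
  set gQ : ℝ → ℝ := fun z => ∫ r in (0:ℝ)..1, deriv Q (r * z + (1 - r) * y) with hgQ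
  have hguF := gFacts y (u.smooth ⊤) Mu' hMu'
  have hgQF := gFacts y hQ' MQ' hMQ'abs
  -- pv limit for u
  have hu_pv := tendsto_pv y (fun z => (u : ℝ → ℝ) z) hum huint gu hguF.2 Mu' hguF.1
    (fun z => diffquot (u.smooth ⊤) y z)
  set Lu := (∫ z, ({z : ℝ | |y - z| < 1}).indicator (fun z => -gu z) z)
      + ∫ z in {z : ℝ | |y - z| < 1}ᶜ, (u : ℝ → ℝ) z / (y - z) with hLu
  -- commutator function
  set h0 : ℝ → ℝ := fun z => -gQ z * u z with hh0def
  have h0m : AEStronglyMeasurable h0 volume := (hgQF.2.neg.mul hum)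
  have h0b : ∀ z, |h0 z| ≤ MQ' * |u z| := fun z => by
    rw [hh0def]
    simp only [abs_mul, abs_neg]
    exact mul_le_mul_of_nonneg_right (hgQF.1 z) (abs_nonneg _)
  have h0int : Integrable h0 volume := by
    refine Integrable.mono' ((huint.abs).const_mul MQ') h0m ?_
    exact Eventually.of_forall fun z => by simpa [Real.norm_eq_abs] using h0b z
  -- commutator identity
  have hcomm : ∀ ε : ℝ, 0 < ε →
      (∫ z in {z : ℝ | ε < |y - z|}, Q z * u z / (y - z))
        - Q y * ∫ z in {z : ℝ | ε < |y - z|}, (u : ℝ → ℝ) z / (y - z)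
      = ∫ z in {z : ℝ | ε < |y - z|}, h0 z := by
    intro ε hε
    have hIQu : IntegrableOn (fun z => Q z * u z / (y - z)) {z | ε < |y - z|} :=
      integrableOn_div y (hQ'.continuous.mul u.continuous).aestronglyMeasurable
      hQuint hε
    have hIu := integrableOn_div y hum huint hε
    rw [← integral_const_mul, ← integral_sub hIQu (hIu.const_mul (Q y))]
    refine setIntegral_congr_fun (measurableSet_lt measurable_const
      ((measurable_const.sub measurable_id).abs)) fun z hz => ?_
    have h0' : (0:ℝ) < |y - z| := lt_trans hε hz
    have hyz : y - z ≠ 0 := by intro h; rw [h] at h0'; simp at h0'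
    have hdq : Q z - Q y = (z - y) * gQ z := diffquot hQ' y z
    rw [hh0def]
    field_simp
    linear_combination (u z) * hdq
  -- limits of each piece
  have hcomm_tendsto : Tendsto (fun ε => ∫ z in {z : ℝ | ε < |y - z|}, h0 z)
      (nhdsWithin 0 (Set.Ioi 0)) (nhds (∫ z, h0 z)) := by
    refine squeezeLemma y h0 h0int (MQ' * Mu) fun z _ => ?_
    exact le_trans (h0b z) (mul_le_mul_of_nonneg_left (hMu z) hMQ'0)
  have hQu_tendsto : Tendsto (fun ε => ∫ z in {z : ℝ | ε < |y - z|}, Q z * u z / (y - z))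
      (nhdsWithin 0 (Set.Ioi 0)) (nhds ((∫ z, h0 z) + Q y * Lu)) := by
    refine Tendsto.congr' ?_ (hcomm_tendsto.add (hu_pv.const_mul (Q y)))
    filter_upwards [self_mem_nhdsWithin] with ε hε
    have := hcomm ε hε
    linarith [this]
  -- pvHilbert values
  have hpv_u : pvHilbert (⇑u) y = (1 / Real.pi) * Lu := by
    refine Filter.Tendsto.limUnder_eq ?_
    exact hu_pv.const_mul (1 / Real.pi)
  have hpv_Qu : pvHilbert (fun z => Q z * u z) y
      = (1 / Real.pi) * ((∫ z, h0 z) + Q y * Lu) := by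
    refine Filter.Tendsto.limUnder_eq ?_
    exact hQu_tendsto.const_mul (1 / Real.pi)
  rw [hpv_u, hpv_Qu]
  have hI : ∫ z, h0 z = -∫ r in (0:ℝ)..1, ∫ z, deriv Q (r * z + (1 - r) * y) * u z := by
    have h1 : ∫ z, h0 z = -∫ z, gQ z * u z := by
      rw [← integral_neg]; congr 1; ext z; rw [hh0def]; ring
    rw [h1, fubini_step y Q hQ' MQ' hMQ'abs u]
  rw [hI]
  ring
end

section
/- For smooth functions u, v of Schwartz class and smooth Q with bounded derivatives, one has ∫ v_y·[𝓗, Q](u_y) dy = −(1/π)·∫₀¹ ∫∫ r·(1−r)·Q'''(r·z + (1−r)·y)·v(y)·u(z) dz dy dr. -/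
open MeasureTheory Real

section HilbertAux

open Filter Set Topology




lemma integrable_bdd_mul {g f : ℝ → ℝ} (hg : Continuous g) {M : ℝ}
    (hM : ∀ x, |g x| ≤ M) (hf : Integrable f) :
    Integrable (fun x => g x * f x) := by
  refine ((hf.norm.const_mul M).mono' (hg.aestronglyMeasurable.mul hf.1) ?_)
  filter_upwards with x
  simp only [norm_mul, Real.norm_eq_abs]
  exact mul_le_mul_of_nonneg_right (hM x) (abs_nonneg _)

lemma lip_of_deriv_bound {f : ℝ → ℝ} (hfd : Differentiable ℝ f)
    (hc : Continuous (deriv f)) {M : ℝ} (hM : ∀ x, |deriv f x| ≤ M) :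
    ∀ a b, |f a - f b| ≤ M * |a - b| := by
  intro a b
  have h1 : ∫ x in b..a, deriv f x = f a - f b :=
    intervalIntegral.integral_deriv_eq_sub (fun x _ => hfd x) (hc.intervalIntegrable _ _)
  rw [← h1]
  have := intervalIntegral.norm_integral_le_of_norm_le_const
    (f := deriv f) (a := b) (b := a) (C := M) (fun x _ => hM x)
  simpa [Real.norm_eq_abs, abs_sub_comm a b] using this

lemma integral_annulus_inv (y ε δ : ℝ) :
    ∫ z in {z : ℝ | ε < |y - z| ∧ |y - z| ≤ δ}, (y - z)⁻¹ = 0 := by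
  set S : Set ℝ := {t : ℝ | ε < |t| ∧ |t| ≤ δ} with hSdef
  have hmeasS : MeasurableSet S := by
    apply MeasurableSet.inter
    · exact measurableSet_lt measurable_const continuous_abs.measurable
    · exact measurableSet_le continuous_abs.measurable measurable_const
  set g : ℝ → ℝ := S.indicator fun t => t⁻¹ with hgdef
  have hodd : ∀ t, g (-t) = -g t := by
    intro t
    by_cases h : t ∈ S
    · have h' : -t ∈ S := by simpa [hSdef, abs_neg] using h
      simp [hgdef, indicator_of_mem h, indicator_of_mem h', inv_neg]
    · have h' : -t ∉ S := by simpa [hSdef, abs_neg] using h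
      simp [hgdef, indicator_of_notMem h, indicator_of_notMem h']
  have h0 : ∫ t, g t = 0 := by
    have h1 : ∫ t, g (-t) = ∫ t, g t := integral_neg_eq_self g volume
    have h2 : ∫ t, g (-t) = -∫ t, g t := by
      simp only [hodd]
      exact integral_neg g
    linarith
  have hA : {z : ℝ | ε < |y - z| ∧ |y - z| ≤ δ} = (fun z => y - z) ⁻¹' S := rfl
  have hmeasA : MeasurableSet {z : ℝ | ε < |y - z| ∧ |y - z| ≤ δ} := by
    rw [hA]; exact hmeasS.preimage (measurable_const.sub measurable_id)
  calc ∫ z in {z : ℝ | ε < |y - z| ∧ |y - z| ≤ δ}, (y - z)⁻¹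
      = ∫ z, ({z : ℝ | ε < |y - z| ∧ |y - z| ≤ δ}).indicator (fun z => (y - z)⁻¹) z :=
        (integral_indicator hmeasA).symm
    _ = ∫ z, g (y - z) := by
        apply integral_congr_ae
        filter_upwards with z
        by_cases h : z ∈ {z : ℝ | ε < |y - z| ∧ |y - z| ≤ δ}
        · rw [indicator_of_mem h, hgdef, indicator_of_mem (by exact h : (y - z) ∈ S)]
        · rw [indicator_of_notMem h, hgdef, indicator_of_notMem (by exact h : (y - z) ∉ S)]
    _ = ∫ t, g t := integral_sub_left_eq_self g volume y
    _ = 0 := h0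


noncomputable def pvLim (f : ℝ → ℝ) (y : ℝ) : ℝ :=
  (∫ z in {z : ℝ | 1 < |y - z|}, f z / (y - z)) +
    ∫ z in {z : ℝ | 0 < |y - z| ∧ |y - z| ≤ 1}, (f z - f y) / (y - z)

lemma measSet1 (y a : ℝ) : MeasurableSet {z : ℝ | a < |y - z|} :=
  measurableSet_lt measurable_const ((measurable_const.sub measurable_id).abs)

lemma measSet2 (y a b : ℝ) : MeasurableSet {z : ℝ | a < |y - z| ∧ |y - z| ≤ b} :=
  (measSet1 y a).inter
    (measurableSet_le ((measurable_const.sub measurable_id).abs) measurable_const)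

lemma measSet3 (y a : ℝ) : MeasurableSet {z : ℝ | |y - z| ≤ a} :=
  measurableSet_le ((measurable_const.sub measurable_id).abs) measurable_const

lemma meas_div {f : ℝ → ℝ} (hfc : Continuous f) (y : ℝ) :
    Measurable (fun z => f z / (y - z)) := by
  simp only [div_eq_mul_inv]
  exact hfc.measurable.mul ((measurable_const.sub measurable_id).inv)

lemma integrableOn_far {f : ℝ → ℝ} (hfc : Continuous f) (hfi : Integrable f)
    {y ε : ℝ} (hε : 0 < ε) :
    IntegrableOn (fun z => f z / (y - z)) {z : ℝ | ε < |y - z|} := by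
  refine (((hfi.norm.const_mul ε⁻¹).restrict).mono'
    ((meas_div hfc y).aestronglyMeasurable) ?_)
  filter_upwards [ae_restrict_mem (measSet1 y ε)] with z hz
  have hz' : ε < |y - z| := hz
  have hyz : (0:ℝ) < |y - z| := hε.trans hz'
  rw [Real.norm_eq_abs, abs_div]
  rw [div_eq_mul_inv, Real.norm_eq_abs, mul_comm (ε⁻¹)]
  apply mul_le_mul_of_nonneg_left _ (abs_nonneg _)
  exact inv_anti₀ hε hz'.le

lemma diffq_bound {f : ℝ → ℝ} {C : ℝ} (hC : 0 ≤ C)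
    (hflip : ∀ a b, |f a - f b| ≤ C * |a - b|) (y z : ℝ) :
    |(f z - f y) / (y - z)| ≤ C := by
  rcases eq_or_ne z y with rfl | hzy
  · simp [hC]
  · rw [abs_div]
    rw [div_le_iff₀ (abs_pos.2 (sub_ne_zero.2 (Ne.symm hzy)))]
    calc |f z - f y| ≤ C * |z - y| := hflip z y
      _ = C * |y - z| := by rw [abs_sub_comm]

lemma integrableOn_near {f : ℝ → ℝ} (hfc : Continuous f) {C : ℝ} (hC : 0 ≤ C)
    (hflip : ∀ a b, |f a - f b| ≤ C * |a - b|) {y : ℝ} {s : Set ℝ}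
    (hs : MeasurableSet s) (hfin : volume s < ⊤) :
    IntegrableOn (fun z => (f z - f y) / (y - z)) s := by
  refine ((integrableOn_const hfin.ne : IntegrableOn (fun _ => C) s volume).mono'
    ((meas_div (by continuity) y).aestronglyMeasurable.restrict) ?_)
  filter_upwards with z
  rw [Real.norm_eq_abs]
  exact diffq_bound hC hflip y z

lemma tendsto_pv_s8 {f : ℝ → ℝ} (hfc : Continuous f) (hfi : Integrable f)
    {C : ℝ} (hC : 0 ≤ C) (hflip : ∀ a b, |f a - f b| ≤ C * |a - b|) (y : ℝ) :
    Tendsto (fun ε => ∫ z in {z : ℝ | ε < |y - z|}, f z / (y - z)) (𝓝[>] (0:ℝ))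
      (𝓝 (pvLim f y)) := by
  rw [← tendsto_sub_nhds_zero_iff]
  apply squeeze_zero_norm' (a := fun ε => C * (2 * ε))
  · filter_upwards [Ioc_mem_nhdsGT_of_mem (by constructor <;> norm_num : (0:ℝ) ∈ Ico (0:ℝ) 1)]
      with ε hε
    obtain ⟨hε0, hε1⟩ := hε
    -- set decompositions
    have hsplit1 : {z : ℝ | ε < |y - z|} =
        {z : ℝ | 1 < |y - z|} ∪ {z : ℝ | ε < |y - z| ∧ |y - z| ≤ 1} := by
      ext z; simp only [mem_setOf_eq, mem_union]
      constructor
      · intro h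
        rcases le_or_gt |y - z| 1 with h1 | h1
        · exact Or.inr ⟨h, h1⟩
        · exact Or.inl h1
      · rintro (h | ⟨h, _⟩)
        · exact lt_of_le_of_lt hε1 h
        · exact h
    have hsplit2 : {z : ℝ | 0 < |y - z| ∧ |y - z| ≤ 1} =
        {z : ℝ | ε < |y - z| ∧ |y - z| ≤ 1} ∪ {z : ℝ | 0 < |y - z| ∧ |y - z| ≤ ε} := by
      ext z; simp only [mem_setOf_eq, mem_union]
      constructor
      · rintro ⟨h0, h1⟩
        rcases le_or_gt |y - z| ε with h2 | h2
        · exact Or.inr ⟨h0, h2⟩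
        · exact Or.inl ⟨h2, h1⟩
      · rintro (⟨h, h1⟩ | ⟨h0, h2⟩)
        · exact ⟨lt_trans hε0 h, h1⟩
        · exact ⟨h0, h2.trans hε1⟩
    have hann_fin : ∀ a b : ℝ, 0 ≤ b → volume {z : ℝ | a < |y - z| ∧ |y - z| ≤ b} < ⊤ := by
      intro a b hb
      calc volume {z : ℝ | a < |y - z| ∧ |y - z| ≤ b}
          ≤ volume (Metric.closedBall y b) := measure_mono (fun z hz => by
            simp only [Metric.mem_closedBall, Real.dist_eq, abs_sub_comm z y]
            exact hz.2)
        _ < ⊤ := by rw [Real.volume_closedBall]; exact ENNReal.ofReal_lt_top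
    -- E1
    have hIfar := integrableOn_far hfc hfi (y := y) zero_lt_one
    have hIann : IntegrableOn (fun z => f z / (y - z))
        {z : ℝ | ε < |y - z| ∧ |y - z| ≤ 1} :=
      (integrableOn_far hfc hfi (y := y) hε0).mono_set (fun z hz => hz.1)
    have hE1 : ∫ z in {z : ℝ | ε < |y - z|}, f z / (y - z)
        = (∫ z in {z : ℝ | 1 < |y - z|}, f z / (y - z))
          + ∫ z in {z : ℝ | ε < |y - z| ∧ |y - z| ≤ 1}, f z / (y - z) := by
      rw [hsplit1]
      refine setIntegral_union ?_ (measSet2 y ε 1) hIfar hIann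
      rw [Set.disjoint_left]
      intro z h1 h2
      simp only [mem_setOf_eq] at h1 h2
      linarith [h1, h2.2]
    -- E2
    have hIann2 : IntegrableOn (fun z => (f z - f y) / (y - z))
        {z : ℝ | ε < |y - z| ∧ |y - z| ≤ 1} :=
      integrableOn_near hfc hC hflip (measSet2 y ε 1) (hann_fin ε 1 zero_le_one)
    have hIinv : IntegrableOn (fun z => f y * (y - z)⁻¹)
        {z : ℝ | ε < |y - z| ∧ |y - z| ≤ 1} := by
      refine ((integrableOn_const (hann_fin ε 1 zero_le_one).ne :
          IntegrableOn (fun _ => |f y| * ε⁻¹) _ volume).mono'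
        ((measurable_const.mul ((measurable_const.sub measurable_id).inv)).aestronglyMeasurable)
        ?_)
      filter_upwards [ae_restrict_mem (measSet2 y ε 1)] with z hz
      rw [Real.norm_eq_abs, abs_mul, abs_inv]
      exact mul_le_mul_of_nonneg_left (inv_anti₀ hε0 hz.1.le) (abs_nonneg _)
    have hpt : ∀ z : ℝ, f z / (y - z) = (f z - f y) / (y - z) + f y * (y - z)⁻¹ := by
      intro z
      rw [← div_eq_mul_inv, ← add_div, sub_add_cancel]
    have hE2 : ∫ z in {z : ℝ | ε < |y - z| ∧ |y - z| ≤ 1}, f z / (y - z)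
        = (∫ z in {z : ℝ | ε < |y - z| ∧ |y - z| ≤ 1}, (f z - f y) / (y - z)) := by
      calc ∫ z in {z : ℝ | ε < |y - z| ∧ |y - z| ≤ 1}, f z / (y - z)
          = ∫ z in {z : ℝ | ε < |y - z| ∧ |y - z| ≤ 1},
              ((f z - f y) / (y - z) + f y * (y - z)⁻¹) := by simp only [hpt]
        _ = (∫ z in {z : ℝ | ε < |y - z| ∧ |y - z| ≤ 1}, (f z - f y) / (y - z))
              + ∫ z in {z : ℝ | ε < |y - z| ∧ |y - z| ≤ 1}, f y * (y - z)⁻¹ :=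
            integral_add hIann2 hIinv
        _ = (∫ z in {z : ℝ | ε < |y - z| ∧ |y - z| ≤ 1}, (f z - f y) / (y - z)) + 0 := by
            rw [integral_const_mul, integral_annulus_inv, mul_zero]
        _ = _ := add_zero _
    -- E3
    have hI0ε : IntegrableOn (fun z => (f z - f y) / (y - z))
        {z : ℝ | 0 < |y - z| ∧ |y - z| ≤ ε} :=
      integrableOn_near hfc hC hflip (measSet2 y 0 ε) (hann_fin 0 ε hε0.le)
    have hE3 : ∫ z in {z : ℝ | 0 < |y - z| ∧ |y - z| ≤ 1}, (f z - f y) / (y - z)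
        = (∫ z in {z : ℝ | ε < |y - z| ∧ |y - z| ≤ 1}, (f z - f y) / (y - z))
          + ∫ z in {z : ℝ | 0 < |y - z| ∧ |y - z| ≤ ε}, (f z - f y) / (y - z) := by
      rw [hsplit2]
      refine setIntegral_union ?_ (measSet2 y 0 ε) hIann2 hI0ε
      rw [Set.disjoint_left]
      intro z h1 h2
      simp only [mem_setOf_eq] at h1 h2
      linarith [h1.1, h2.2]
    have hkey : (∫ z in {z : ℝ | ε < |y - z|}, f z / (y - z)) - pvLim f y
        = -∫ z in {z : ℝ | 0 < |y - z| ∧ |y - z| ≤ ε}, (f z - f y) / (y - z) := by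
      rw [hE1, hE2, pvLim, hE3]; ring
    rw [hkey, norm_neg]
    have hbd : ‖∫ z in {z : ℝ | 0 < |y - z| ∧ |y - z| ≤ ε}, (f z - f y) / (y - z)‖
        ≤ C * (volume {z : ℝ | 0 < |y - z| ∧ |y - z| ≤ ε}).toReal := by
      refine norm_setIntegral_le_of_norm_le_const (hann_fin 0 ε hε0.le) ?_
      intro z _
      rw [Real.norm_eq_abs]
      exact diffq_bound hC hflip y z
    refine hbd.trans ?_
    have hvol : (volume {z : ℝ | 0 < |y - z| ∧ |y - z| ≤ ε}).toReal ≤ 2 * ε := by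
      refine ENNReal.toReal_le_of_le_ofReal (by positivity) ?_
      refine le_trans (measure_mono (fun z hz => ?_)) (le_of_eq (Real.volume_closedBall y ε))
      simp only [Metric.mem_closedBall, Real.dist_eq, abs_sub_comm z y]
      exact hz.2
    exact mul_le_mul_of_nonneg_left hvol hC
  · have hcont : Tendsto (fun ε : ℝ => C * (2 * ε)) (𝓝 0) (𝓝 (C * (2 * 0))) :=
      (tendsto_const_nhds.mul (tendsto_const_nhds.mul tendsto_id))
    simpa using hcont.mono_left nhdsWithin_le_nhds

lemma integrable_bdd_mul' {g f : ℝ → ℝ} (hg : Measurable g) {M : ℝ}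
    (hM : ∀ x, |g x| ≤ M) (hf : Integrable f) :
    Integrable (fun x => g x * f x) := by
  refine ((hf.norm.const_mul M).mono' (hg.aestronglyMeasurable.mul hf.1) ?_)
  filter_upwards with x
  simp only [norm_mul, Real.norm_eq_abs]
  exact mul_le_mul_of_nonneg_right (hM x) (abs_nonneg _)

lemma pvHilbert_eq {f : ℝ → ℝ} (hfc : Continuous f) (hfi : Integrable f)
    {C : ℝ} (hC : 0 ≤ C) (hflip : ∀ a b, |f a - f b| ≤ C * |a - b|) (y : ℝ) :
    pvHilbert f y = (1 / Real.pi) * pvLim f y :=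
  ((tendsto_pv_s8 hfc hfi hC hflip y).const_mul (1 / Real.pi)).limUnder_eq

lemma commutator_pv {f Q : ℝ → ℝ} (hfc : Continuous f) (hfi : Integrable f)
    {Cf Mf : ℝ} (hCf : 0 ≤ Cf) (hflip : ∀ a b, |f a - f b| ≤ Cf * |a - b|)
    (hMf : ∀ x, |f x| ≤ Mf)
    (hQc : Continuous Q) {CQ MQ : ℝ} (hCQ : 0 ≤ CQ)
    (hQlip : ∀ a b, |Q a - Q b| ≤ CQ * |a - b|) (hMQ : ∀ x, |Q x| ≤ MQ) (y : ℝ) :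
    pvHilbert (fun z => Q z * f z) y - Q y * pvHilbert f y
      = (1 / Real.pi) * ∫ z, (Q z - Q y) / (y - z) * f z := by
  have hMf0 : 0 ≤ Mf := (abs_nonneg _).trans (hMf 0)
  have hMQ0 : 0 ≤ MQ := (abs_nonneg _).trans (hMQ 0)
  have hQfc : Continuous fun z => Q z * f z := hQc.mul hfc
  have hQfi : Integrable fun z => Q z * f z := integrable_bdd_mul hQc hMQ hfi
  have hQflip : ∀ a b, |Q a * f a - Q b * f b| ≤ (MQ * Cf + Mf * CQ) * |a - b| := by
    intro a b
    calc |Q a * f a - Q b * f b| = |Q a * (f a - f b) + f b * (Q a - Q b)| := by ring_nf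
      _ ≤ |Q a * (f a - f b)| + |f b * (Q a - Q b)| := abs_add_le _ _
      _ = |Q a| * |f a - f b| + |f b| * |Q a - Q b| := by rw [abs_mul, abs_mul]
      _ ≤ MQ * (Cf * |a - b|) + Mf * (CQ * |a - b|) := by
          refine add_le_add (mul_le_mul (hMQ a) (hflip a b) (abs_nonneg _) hMQ0)
            (mul_le_mul (hMf b) (hQlip a b) (abs_nonneg _) hMf0)
      _ = (MQ * Cf + Mf * CQ) * |a - b| := by ring
  have hQflip0 : (0:ℝ) ≤ MQ * Cf + Mf * CQ := by positivity
  set K : ℝ → ℝ := fun z => (Q z - Q y) / (y - z) * f z with hKdef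
  have hKm : Measurable K :=
    ((hQc.measurable.sub measurable_const).div
      (measurable_const.sub measurable_id)).mul hfc.measurable
  have hKbd : ∀ z, |K z| ≤ CQ * |f z| := by
    intro z
    rw [hKdef, abs_mul]
    exact mul_le_mul_of_nonneg_right (diffq_bound hCQ hQlip y z) (abs_nonneg _)
  have hKi : Integrable K := by
    refine ((hfi.norm.const_mul CQ).mono' hKm.aestronglyMeasurable ?_)
    filter_upwards with z
    rw [Real.norm_eq_abs]
    exact hKbd z
  have tA := tendsto_pv_s8 hQfc hQfi hQflip0 hQflip y
  have tB := tendsto_pv_s8 hfc hfi hCf hflip y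
  have tD := tA.sub (tB.const_mul (Q y))
  have heq : ∀ᶠ ε in (nhdsWithin (0:ℝ) (Set.Ioi 0)),
      (∫ z in {z : ℝ | ε < |y - z|}, Q z * f z / (y - z))
        - Q y * ∫ z in {z : ℝ | ε < |y - z|}, f z / (y - z)
      = ∫ z in {z : ℝ | ε < |y - z|}, K z := by
    filter_upwards [self_mem_nhdsWithin] with ε (hε : 0 < ε)
    rw [← integral_const_mul, ← integral_sub (integrableOn_far hQfc hQfi hε)
      (((integrableOn_far hfc hfi hε)).const_mul (Q y))]
    apply setIntegral_congr_ae (measSet1 y ε)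
    filter_upwards with z _
    rcases eq_or_ne (y - z) 0 with h0 | h0
    · simp [hKdef, h0]
    · simp only [hKdef]
      ring
  have tJ : Tendsto (fun ε => ∫ z in {z : ℝ | ε < |y - z|}, K z)
      (nhdsWithin (0:ℝ) (Set.Ioi 0)) (𝓝 (∫ z, K z)) := by
    rw [← tendsto_sub_nhds_zero_iff]
    apply squeeze_zero_norm' (a := fun ε => (CQ * Mf) * (2 * ε))
    · filter_upwards [self_mem_nhdsWithin] with ε (hε : 0 < ε)
      have hsplit : (Set.univ : Set ℝ) = {z : ℝ | ε < |y - z|} ∪ {z : ℝ | |y - z| ≤ ε} := by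
        ext z; simp only [Set.mem_univ, Set.mem_union, Set.mem_setOf_eq, true_iff]
        exact (lt_or_ge ε |y - z|).imp id id
      have hfin : volume {z : ℝ | |y - z| ≤ ε} < ⊤ := by
        calc volume {z : ℝ | |y - z| ≤ ε} ≤ volume (Metric.closedBall y ε) :=
            measure_mono (fun z hz => by
              simp only [Metric.mem_closedBall, Real.dist_eq, abs_sub_comm z y]
              exact hz)
          _ < ⊤ := by rw [Real.volume_closedBall]; exact ENNReal.ofReal_lt_top
      have hEfull : ∫ z, K z = (∫ z in {z : ℝ | ε < |y - z|}, K z)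
          + ∫ z in {z : ℝ | |y - z| ≤ ε}, K z := by
        rw [← setIntegral_univ, hsplit]
        refine setIntegral_union ?_ (measSet3 y ε) hKi.integrableOn hKi.integrableOn
        rw [Set.disjoint_left]
        intro z h1 h2
        simp only [Set.mem_setOf_eq] at h1 h2
        linarith
      have : (∫ z in {z : ℝ | ε < |y - z|}, K z) - ∫ z, K z
          = -∫ z in {z : ℝ | |y - z| ≤ ε}, K z := by rw [hEfull]; ring
      rw [this, norm_neg]
      have hbd : ‖∫ z in {z : ℝ | |y - z| ≤ ε}, K z‖
          ≤ (CQ * Mf) * (volume {z : ℝ | |y - z| ≤ ε}).toReal := by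
        refine norm_setIntegral_le_of_norm_le_const hfin ?_
        intro z _
        rw [Real.norm_eq_abs]
        exact (hKbd z).trans (mul_le_mul_of_nonneg_left (hMf z) hCQ)
      refine hbd.trans ?_
      have hvol : (volume {z : ℝ | |y - z| ≤ ε}).toReal ≤ 2 * ε := by
        refine ENNReal.toReal_le_of_le_ofReal (by positivity) ?_
        refine le_trans (measure_mono (fun z hz => ?_)) (le_of_eq (Real.volume_closedBall y ε))
        simp only [Metric.mem_closedBall, Real.dist_eq, abs_sub_comm z y]
        exact hz
      exact mul_le_mul_of_nonneg_left hvol (by positivity)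
    · have hcont : Tendsto (fun ε : ℝ => (CQ * Mf) * (2 * ε)) (𝓝 0) (𝓝 ((CQ * Mf) * (2 * 0))) :=
        (tendsto_const_nhds.mul (tendsto_const_nhds.mul tendsto_id))
      simpa using hcont.mono_left nhdsWithin_le_nhds
  have huniq : pvLim (fun z => Q z * f z) y - Q y * pvLim f y = ∫ z, K z :=
    tendsto_nhds_unique (tD.congr' heq) tJ
  rw [pvHilbert_eq hQfc hQfi hQflip0 hQflip y, pvHilbert_eq hfc hfi hCf hflip y, ← huniq]
  ring

lemma kernel_eq {Q : ℝ → ℝ} (hQd : Differentiable ℝ Q) (hQ'c : Continuous (deriv Q))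
    {y z : ℝ} (hzy : z ≠ y) :
    (Q z - Q y) / (y - z) = -∫ r in (0:ℝ)..1, deriv Q (r * z + (1 - r) * y) := by
  have hc : z - y ≠ 0 := sub_ne_zero.2 hzy
  have h1 : ∫ r in (0:ℝ)..1, deriv Q ((z - y) * r + y)
      = (z - y)⁻¹ • ∫ t in ((z-y) * 0 + y)..((z-y) * 1 + y), deriv Q t :=
    intervalIntegral.integral_comp_mul_add (deriv Q) hc y
  have h2 : ∫ t in ((z-y) * 0 + y)..((z-y) * 1 + y), deriv Q t = Q z - Q y := by
    have : ((z-y) * 0 + y) = y := by ring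
    rw [this]
    have : ((z-y) * 1 + y) = z := by ring
    rw [this]
    exact intervalIntegral.integral_deriv_eq_sub (fun x _ => hQd x)
      (hQ'c.intervalIntegrable _ _)
  have h3 : ∫ r in (0:ℝ)..1, deriv Q (r * z + (1 - r) * y)
      = ∫ r in (0:ℝ)..1, deriv Q ((z - y) * r + y) := by
    apply intervalIntegral.integral_congr
    intro r _
    congr 1
    ring
  rw [h3, h1, h2, smul_eq_mul, show y - z = -(z - y) by ring, div_neg, neg_inj,
    div_eq_inv_mul]

lemma ibp_affine {g : ℝ → ℝ} (hgd : Differentiable ℝ g) (hgc : Continuous g)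
    {Mg Mg' : ℝ} (hMg : ∀ x, |g x| ≤ Mg) (hg'c : Continuous (deriv g))
    (hMg' : ∀ x, |deriv g x| ≤ Mg') (w : SchwartzMap ℝ ℝ) (c d : ℝ) :
    ∫ x, g (c * x + d) * deriv (⇑w) x = -∫ x, (c * deriv g (c * x + d)) * w x := by
  have hw' : deriv (⇑w) = ⇑(SchwartzMap.derivCLM ℝ ℝ w) := by
    funext x; rw [SchwartzMap.derivCLM_apply]
  have hwda : ∀ x : ℝ, HasDerivAt (⇑w) (deriv (⇑w) x) x := fun x =>
    ((w.smooth ⊤).differentiable (by simp) x).hasDerivAt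
  have haff : ∀ x : ℝ, HasDerivAt (fun x => g (c * x + d)) (c * deriv g (c * x + d)) x := by
    intro x
    have h1 : HasDerivAt (fun x : ℝ => c * x + d) c x := by
      simpa using ((hasDerivAt_id x).const_mul c).add_const d
    have h2 : HasDerivAt g (deriv g (c * x + d)) (c * x + d) :=
      (hgd (c * x + d)).hasDerivAt
    have := h2.comp x h1; rw [mul_comm] at this; exact this
  have haffc : Continuous fun x : ℝ => c * x + d :=
    (continuous_const.mul continuous_id).add continuous_const
  have hgcb : Continuous fun x => g (c * x + d) := hgc.comp haffc
  have hgcb' : Continuous fun x => c * deriv g (c * x + d) :=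
    continuous_const.mul (hg'c.comp haffc)
  have h1 : Integrable ((fun x => g (c * x + d)) * deriv (⇑w)) := by
    rw [hw']
    exact integrable_bdd_mul hgcb (fun x => hMg _) (SchwartzMap.derivCLM ℝ ℝ w).integrable
  have h2 : Integrable ((fun x => c * deriv g (c * x + d)) * ⇑w) := by
    refine integrable_bdd_mul hgcb' (M := |c| * Mg') (fun x => ?_) w.integrable
    rw [abs_mul]
    exact mul_le_mul_of_nonneg_left (hMg' _) (abs_nonneg _)
  have h3 : Integrable ((fun x => g (c * x + d)) * ⇑w) :=
    integrable_bdd_mul hgcb (fun x => hMg _) w.integrable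
  exact integral_mul_deriv_eq_deriv_mul_of_integrable (fun x _ => haff x) (fun x _ => hwda x) h1 h2 h3

lemma swap_Ioc {F : ℝ → ℝ → ℝ}
    (hFm : AEStronglyMeasurable (Function.uncurry F)
      (volume.prod (volume.restrict (Set.Ioc (0:ℝ) 1))))
    {h : ℝ → ℝ} (hh : Integrable h)
    (hbd : ∀ z r, r ∈ Set.Ioc (0:ℝ) 1 → |F z r| ≤ h z) :
    ∫ z, ∫ r in Set.Ioc (0:ℝ) 1, F z r = ∫ r in Set.Ioc (0:ℝ) 1, ∫ z, F z r := by
  apply MeasureTheory.integral_integral_swap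
  refine ((hh.mul_prod (integrable_const 1)).mono' hFm ?_)
  have hres : (volume : Measure ℝ).prod (volume.restrict (Set.Ioc (0:ℝ) 1))
      = ((volume : Measure ℝ).prod volume).restrict (Set.univ ×ˢ Set.Ioc (0:ℝ) 1) := by
    rw [← MeasureTheory.Measure.prod_restrict, MeasureTheory.Measure.restrict_univ]
  rw [hres]
  filter_upwards [MeasureTheory.ae_restrict_mem (MeasurableSet.univ.prod measurableSet_Ioc)]
    with p hp
  have hp2 : p.2 ∈ Set.Ioc (0:ℝ) 1 := hp.2
  rw [Real.norm_eq_abs, mul_one]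
  exact hbd p.1 p.2 hp2

lemma swap_full {F : ℝ → ℝ → ℝ}
    (hFm : AEStronglyMeasurable (Function.uncurry F) (volume.prod volume))
    {h₁ h₂ : ℝ → ℝ} (h1 : Integrable h₁) (h2 : Integrable h₂)
    (hbd : ∀ y z, |F y z| ≤ h₁ y * h₂ z) :
    ∫ y, ∫ z, F y z = ∫ z, ∫ y, F y z := by
  apply MeasureTheory.integral_integral_swap
  refine ((h1.mul_prod h2).mono' hFm ?_)
  filter_upwards with p
  rw [Real.norm_eq_abs]
  exact hbd p.1 p.2

end HilbertAux

open Filter Set Topology in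
/-- For Schwartz `u, v` and smooth `Q` with bounded derivatives,
`∫ v_y·[𝓗,Q](u_y) dy = −(1/π)∫₀¹∫∫ r(1−r) Q'''(rz+(1−r)y) v(y) u(z) dz dy dr`. -/
theorem hilbert_commutator_derivative_pairing (Q : ℝ → ℝ)
    (hQ : ContDiff ℝ (⊤ : ℕ∞) Q)
    (hQb : ∀ n : ℕ, ∃ C : ℝ, ∀ x : ℝ, |iteratedDeriv n Q x| ≤ C)
    (u v : SchwartzMap ℝ ℝ) :
    (∫ y : ℝ, deriv (⇑v) y *
        (pvHilbert (fun z => Q z * deriv (⇑u) z) y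
          - Q y * pvHilbert (fun z => deriv (⇑u) z) y))
      = -(1 / Real.pi) *
          ∫ r in (0:ℝ)..1, ∫ y : ℝ, ∫ z : ℝ,
            r * (1 - r) * iteratedDeriv 3 Q (r * z + (1 - r) * y) * v y * u z := by
  classical
  have hQ' : Differentiable ℝ Q ∧ ContDiff ℝ (↑(⊤:ℕ∞)) (deriv Q) :=
    contDiff_infty_iff_deriv.mp (hQ.of_le (by simp))
  have hQ'' : Differentiable ℝ (deriv Q) ∧ ContDiff ℝ (↑(⊤:ℕ∞)) (deriv (deriv Q)) :=
    contDiff_infty_iff_deriv.mp hQ'.2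
  have hQ''' : Differentiable ℝ (deriv (deriv Q)) ∧
      ContDiff ℝ (↑(⊤:ℕ∞)) (deriv (deriv (deriv Q))) :=
    contDiff_infty_iff_deriv.mp hQ''.2
  have hQc : Continuous Q := (hQ.of_le ((by simp) : (0:WithTop ℕ∞) ≤ _)).continuous
  have hQ1c : Continuous (deriv Q) := hQ'.2.continuous
  have hQ2c : Continuous (deriv (deriv Q)) := hQ''.2.continuous
  have hQ3c : Continuous (deriv (deriv (deriv Q))) := hQ'''.2.continuous
  obtain ⟨M0, hM0⟩ := hQb 0
  obtain ⟨M1, hM1⟩ := hQb 1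
  obtain ⟨M2, hM2⟩ := hQb 2
  obtain ⟨M3, hM3⟩ := hQb 3
  have e3 : iteratedDeriv 3 Q = deriv (deriv (deriv Q)) := by
    rw [show (3:ℕ) = 2+1 from rfl, iteratedDeriv_succ', show (2:ℕ) = 1+1 from rfl,
      iteratedDeriv_succ', iteratedDeriv_one]
  have hM0' : ∀ x, |Q x| ≤ M0 := by simpa [iteratedDeriv_zero] using hM0
  have hM1' : ∀ x, |deriv Q x| ≤ M1 := by simpa [iteratedDeriv_one] using hM1
  have hM2' : ∀ x, |deriv (deriv Q) x| ≤ M2 := by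
    intro x
    have := hM2 x
    rwa [show (2:ℕ) = 1+1 from rfl, iteratedDeriv_succ', iteratedDeriv_one] at this
  have hM3' : ∀ x, |deriv (deriv (deriv Q)) x| ≤ M3 := by
    intro x
    have := hM3 x
    rwa [e3] at this
  have hM1n : (0:ℝ) ≤ M1 := (abs_nonneg _).trans (hM1' 0)
  have hM2n : (0:ℝ) ≤ M2 := (abs_nonneg _).trans (hM2' 0)
  have hM3n : (0:ℝ) ≤ M3 := (abs_nonneg _).trans (hM3' 0)
  have hQlip : ∀ a b, |Q a - Q b| ≤ M1 * |a - b| :=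
    lip_of_deriv_bound hQ'.1 hQ1c hM1'
  -- Schwartz derivatives
  set u₁ := SchwartzMap.derivCLM ℝ ℝ u with hu₁def
  set u₂ := SchwartzMap.derivCLM ℝ ℝ u₁ with hu₂def
  set v₁ := SchwartzMap.derivCLM ℝ ℝ v with hv₁def
  have hu1 : deriv (⇑u) = ⇑u₁ := by
    funext x; exact (SchwartzMap.derivCLM_apply ℝ u x).symm
  have hu2 : deriv (⇑u₁) = ⇑u₂ := by
    funext x; exact (SchwartzMap.derivCLM_apply ℝ u₁ x).symm
  have hv1 : deriv (⇑v) = ⇑v₁ := by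
    funext x; exact (SchwartzMap.derivCLM_apply ℝ v x).symm
  set Mu1 := (SchwartzMap.seminorm ℝ 0 0) u₁ with hMu1def
  set Mu2 := (SchwartzMap.seminorm ℝ 0 0) u₂ with hMu2def
  have hMu1 : ∀ x, |u₁ x| ≤ Mu1 := fun x => by
    simpa [Real.norm_eq_abs] using SchwartzMap.norm_le_seminorm ℝ u₁ x
  have hMu2 : ∀ x, |u₂ x| ≤ Mu2 := fun x => by
    simpa [Real.norm_eq_abs] using SchwartzMap.norm_le_seminorm ℝ u₂ x
  have hMu2n : (0:ℝ) ≤ Mu2 := apply_nonneg _ _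
  have hu₁lip : ∀ a b, |u₁ a - u₁ b| ≤ Mu2 * |a - b| := by
    refine lip_of_deriv_bound ((u₁.smooth ⊤).differentiable (by simp)) ?_ ?_
    · rw [hu2]; exact u₂.continuous
    · intro x; rw [hu2]; exact hMu2 x
  -- Step 1: commutator representation
  have hcomm : ∀ y : ℝ,
      pvHilbert (fun z => Q z * u₁ z) y - Q y * pvHilbert (⇑u₁) y
        = (1 / Real.pi) * ∫ z, (Q z - Q y) / (y - z) * u₁ z := fun y =>
    commutator_pv u₁.continuous u₁.integrable hMu2n hu₁lip hMu1
      hQc hM1n hQlip hM0' y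
  -- Step 2: kernel representation
  have hker : ∀ y : ℝ, (∫ z, (Q z - Q y) / (y - z) * u₁ z)
      = -∫ z, (∫ r in Set.Ioc (0:ℝ) 1, deriv Q (r * z + (1 - r) * y)) * u₁ z := by
    intro y
    rw [← integral_neg]
    apply integral_congr_ae
    have hae : ∀ᵐ z : ℝ, z ≠ y := by
      rw [ae_iff]
      have : {z : ℝ | ¬ z ≠ y} = {y} := by ext w; simp
      rw [this]
      exact measure_singleton y
    filter_upwards [hae] with z hz
    rw [kernel_eq hQ'.1 hQ1c hz, intervalIntegral.integral_of_le zero_le_one]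
    ring
  -- Step 3a: swap z and r
  have hswap1 : ∀ y : ℝ,
      (∫ z, (∫ r in Set.Ioc (0:ℝ) 1, deriv Q (r * z + (1 - r) * y)) * u₁ z)
        = ∫ r in Set.Ioc (0:ℝ) 1, ∫ z, deriv Q (r * z + (1 - r) * y) * u₁ z := by
    intro y
    have hpt : ∀ z : ℝ, (∫ r in Set.Ioc (0:ℝ) 1, deriv Q (r * z + (1 - r) * y)) * u₁ z
        = ∫ r in Set.Ioc (0:ℝ) 1, deriv Q (r * z + (1 - r) * y) * u₁ z := fun z =>
      (integral_mul_const (u₁ z) _).symm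
    simp only [hpt]
    refine swap_Ioc ?_ (u₁.integrable.norm.const_mul M1) ?_
    · refine Continuous.aestronglyMeasurable ?_
      refine Continuous.mul (hQ1c.comp ?_) (u₁.continuous.comp continuous_fst)
      exact (continuous_snd.mul continuous_fst).add
        ((continuous_const.sub continuous_snd).mul continuous_const)
    · intro z r _
      rw [abs_mul, Real.norm_eq_abs]
      exact mul_le_mul_of_nonneg_right (hM1' _) (abs_nonneg _)
  -- Step 3b: integration by parts in z
  have hibp1 : ∀ r y : ℝ, (∫ z, deriv Q (r * z + (1 - r) * y) * u₁ z)
      = -∫ z, (r * deriv (deriv Q) (r * z + (1 - r) * y)) * u z := by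
    intro r y
    rw [← hu1]
    exact ibp_affine hQ''.1 hQ1c hM1' hQ2c hM2' u r ((1 - r) * y)
  -- Step 3c: integration by parts in y
  have hibp2 : ∀ r z : ℝ, (∫ y, deriv (deriv Q) (r * z + (1 - r) * y) * v₁ y)
      = -∫ y, ((1 - r) * deriv (deriv (deriv Q)) (r * z + (1 - r) * y)) * v y := by
    intro r z
    have h := ibp_affine hQ'''.1 hQ2c hM2' hQ3c hM3' v (1 - r) (r * z)
    have harg : ∀ x : ℝ, (1 - r) * x + r * z = r * z + (1 - r) * x := fun x => by ring
    rw [← hv1]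
    simp only [harg] at h
    exact h
  have hibp2' : ∀ r z : ℝ,
      (∫ y, v₁ y * ((r * deriv (deriv Q) (r * z + (1 - r) * y)) * u z))
        = -∫ y, r * (1 - r) * deriv (deriv (deriv Q)) (r * z + (1 - r) * y) * v y * u z := by
    intro r z
    have hpt : ∀ y : ℝ, v₁ y * ((r * deriv (deriv Q) (r * z + (1 - r) * y)) * u z)
        = (r * u z) * (deriv (deriv Q) (r * z + (1 - r) * y) * v₁ y) := fun y => by ring
    simp only [hpt]
    rw [integral_const_mul, hibp2 r z, mul_neg, ← integral_const_mul]
    congr 1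
    apply integral_congr_ae
    filter_upwards with y
    ring
  -- integrability and bounds of the inner z-integral
  have haffc : ∀ r y : ℝ, Continuous fun z : ℝ => r * z + (1 - r) * y := fun r y =>
    (continuous_const.mul continuous_id).add continuous_const
  have hIz : ∀ r y : ℝ,
      Integrable (fun z => (r * deriv (deriv Q) (r * z + (1 - r) * y)) * u z) := by
    intro r y
    refine integrable_bdd_mul (continuous_const.mul (hQ2c.comp (haffc r y)))
      (M := |r| * M2) (fun x => ?_) u.integrable
    rw [abs_mul]
    exact mul_le_mul_of_nonneg_left (hM2' _) (abs_nonneg r)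
  have hIzbd : ∀ r y : ℝ, r ∈ Set.Ioc (0:ℝ) 1 →
      |∫ z, (r * deriv (deriv Q) (r * z + (1 - r) * y)) * u z| ≤ M2 * ∫ z, |u z| := by
    intro r y hr
    have h1 : |r| ≤ 1 := abs_le.mpr ⟨by linarith [hr.1], hr.2⟩
    calc |∫ z, (r * deriv (deriv Q) (r * z + (1 - r) * y)) * u z|
        ≤ ∫ z, |(r * deriv (deriv Q) (r * z + (1 - r) * y)) * u z| := by
          have := norm_integral_le_integral_norm (μ := volume)
            (fun z => (r * deriv (deriv Q) (r * z + (1 - r) * y)) * u z)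
          simpa only [Real.norm_eq_abs] using this
      _ ≤ ∫ z, M2 * |u z| := by
          refine integral_mono (hIz r y).abs ((u.integrable.abs.const_mul M2)) (fun z => ?_)
          calc |(r * deriv (deriv Q) (r * z + (1 - r) * y)) * u z|
              = |r| * |deriv (deriv Q) (r * z + (1 - r) * y)| * |u z| := by
                rw [abs_mul, abs_mul]
            _ ≤ 1 * M2 * |u z| := by
                refine mul_le_mul_of_nonneg_right ?_ (abs_nonneg _)
                exact mul_le_mul h1 (hM2' _) (abs_nonneg _) zero_le_one
            _ = M2 * |u z| := by ring
      _ = M2 * ∫ z, |u z| := integral_const_mul _ _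
  -- Step 3d: swap y and r
  have hswap2 :
      (∫ y, ∫ r in Set.Ioc (0:ℝ) 1,
          v₁ y * ∫ z, (r * deriv (deriv Q) (r * z + (1 - r) * y)) * u z)
      = ∫ r in Set.Ioc (0:ℝ) 1, ∫ y,
          v₁ y * ∫ z, (r * deriv (deriv Q) (r * z + (1 - r) * y)) * u z := by
    refine swap_Ioc ?_ (h := fun y => |v₁ y| * (M2 * ∫ z, |u z|))
      (v₁.integrable.abs.mul_const _) ?_
    · have hSM : StronglyMeasurable (Function.uncurry fun (p : ℝ × ℝ) (z : ℝ) =>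
          (p.2 * deriv (deriv Q) (p.2 * z + (1 - p.2) * p.1)) * u z) := by
        apply Continuous.stronglyMeasurable
        refine Continuous.mul (Continuous.mul ?_ (hQ2c.comp ?_)) (u.continuous.comp continuous_snd)
        · exact continuous_fst.snd
        · exact (continuous_fst.snd.mul continuous_snd).add
            ((continuous_const.sub continuous_fst.snd).mul continuous_fst.fst)
      have hInt : StronglyMeasurable fun p : ℝ × ℝ =>
          ∫ z, (p.2 * deriv (deriv Q) (p.2 * z + (1 - p.2) * p.1)) * u z :=
        hSM.integral_prod_right (ν := volume)
      exact ((v₁.continuous.comp continuous_fst).stronglyMeasurable.mul hInt).aestronglyMeasurable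
    · intro y r hr
      rw [abs_mul]
      exact mul_le_mul_of_nonneg_left (hIzbd r y hr) (abs_nonneg _)
  -- Step 3e: swap y and z for fixed r
  have hswap3 : ∀ r : ℝ, r ∈ Set.Ioc (0:ℝ) 1 →
      (∫ y, ∫ z, v₁ y * ((r * deriv (deriv Q) (r * z + (1 - r) * y)) * u z))
      = ∫ z, ∫ y, v₁ y * ((r * deriv (deriv Q) (r * z + (1 - r) * y)) * u z) := by
    intro r hr
    have h1 : |r| ≤ 1 := abs_le.mpr ⟨by linarith [hr.1], hr.2⟩
    refine swap_full ?_ v₁.integrable.abs (u.integrable.abs.const_mul M2) ?_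
    · refine Continuous.aestronglyMeasurable ?_
      refine Continuous.mul (v₁.continuous.comp continuous_fst) ?_
      refine Continuous.mul (continuous_const.mul (hQ2c.comp ?_))
        (u.continuous.comp continuous_snd)
      exact ((continuous_const.mul continuous_snd).add
        (continuous_const.mul continuous_fst))
    · intro y z
      rw [abs_mul]
      refine mul_le_mul_of_nonneg_left ?_ (abs_nonneg _)
      calc |(r * deriv (deriv Q) (r * z + (1 - r) * y)) * u z|
          = |r| * |deriv (deriv Q) (r * z + (1 - r) * y)| * |u z| := by
            rw [abs_mul, abs_mul]
        _ ≤ 1 * M2 * |u z| := by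
            refine mul_le_mul_of_nonneg_right ?_ (abs_nonneg _)
            exact mul_le_mul h1 (hM2' _) (abs_nonneg _) zero_le_one
        _ = M2 * |u z| := by ring
  -- Step 3f: swap z and y back for fixed r
  have hswap4 : ∀ r : ℝ, r ∈ Set.Ioc (0:ℝ) 1 →
      (∫ z, ∫ y, r * (1 - r) * deriv (deriv (deriv Q)) (r * z + (1 - r) * y) * v y * u z)
      = ∫ y, ∫ z, r * (1 - r) * deriv (deriv (deriv Q)) (r * z + (1 - r) * y) * v y * u z := by
    intro r hr
    have h1 : 0 ≤ r * (1 - r) ∧ r * (1 - r) ≤ 1 := by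
      constructor <;> nlinarith [hr.1, hr.2]
    refine swap_full ?_ u.integrable.abs (v.integrable.abs.const_mul M3) ?_
    · refine Continuous.aestronglyMeasurable ?_
      refine Continuous.mul (Continuous.mul (Continuous.mul continuous_const
        (hQ3c.comp ?_)) (v.continuous.comp continuous_snd)) (u.continuous.comp continuous_fst)
      exact ((continuous_const.mul continuous_fst).add
        (continuous_const.mul continuous_snd))
    · intro z y
      calc |r * (1 - r) * deriv (deriv (deriv Q)) (r * z + (1 - r) * y) * v y * u z|
          = (|r * (1 - r)| * |deriv (deriv (deriv Q)) (r * z + (1 - r) * y)|)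
              * |v y| * |u z| := by rw [abs_mul, abs_mul, abs_mul]
        _ ≤ (1 * M3) * |v y| * |u z| := by
            refine mul_le_mul_of_nonneg_right (mul_le_mul_of_nonneg_right ?_ (abs_nonneg _))
              (abs_nonneg _)
            refine mul_le_mul ?_ (hM3' _) (abs_nonneg _) zero_le_one
            rw [abs_of_nonneg h1.1]; exact h1.2
        _ = |u z| * (M3 * |v y|) := by ring
  -- Assemble everything
  rw [e3, intervalIntegral.integral_of_le zero_le_one]
  simp only [hu1, hv1]
  calc ∫ y, v₁ y * (pvHilbert (fun z => Q z * u₁ z) y - Q y * pvHilbert (⇑u₁) y)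
      = ∫ y, (1 / Real.pi) * (v₁ y * ∫ z, (Q z - Q y) / (y - z) * u₁ z) := by
        apply integral_congr_ae; filter_upwards with y
        rw [hcomm y]; ring
    _ = (1 / Real.pi) * ∫ y, v₁ y * ∫ z, (Q z - Q y) / (y - z) * u₁ z :=
        integral_const_mul _ _
    _ = (1 / Real.pi) * ∫ y, -(v₁ y *
          ∫ z, (∫ r in Set.Ioc (0:ℝ) 1, deriv Q (r * z + (1 - r) * y)) * u₁ z) := by
        congr 1; apply integral_congr_ae; filter_upwards with y
        rw [hker y]; ring
    _ = (1 / Real.pi) * ∫ y, -(v₁ y *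
          ∫ r in Set.Ioc (0:ℝ) 1, ∫ z, deriv Q (r * z + (1 - r) * y) * u₁ z) := by
        congr 1; apply integral_congr_ae; filter_upwards with y
        rw [hswap1 y]
    _ = (1 / Real.pi) * ∫ y, ∫ r in Set.Ioc (0:ℝ) 1,
          v₁ y * ∫ z, (r * deriv (deriv Q) (r * z + (1 - r) * y)) * u z := by
        congr 1; apply integral_congr_ae; filter_upwards with y
        simp only [hibp1]
        rw [integral_neg, mul_neg, neg_neg, ← integral_const_mul]
    _ = ∫ r in Set.Ioc (0:ℝ) 1, (1 / Real.pi) * ∫ y,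
          v₁ y * ∫ z, (r * deriv (deriv Q) (r * z + (1 - r) * y)) * u z := by
        rw [hswap2, integral_const_mul]
    _ = ∫ r in Set.Ioc (0:ℝ) 1, (1 / Real.pi) *
          -(∫ y, ∫ z, r * (1 - r) * deriv (deriv (deriv Q)) (r * z + (1 - r) * y) * v y * u z) := by
        apply setIntegral_congr_ae measurableSet_Ioc
        filter_upwards with r hr
        congr 1
        calc ∫ y, v₁ y * ∫ z, (r * deriv (deriv Q) (r * z + (1 - r) * y)) * u z
            = ∫ y, ∫ z, v₁ y * ((r * deriv (deriv Q) (r * z + (1 - r) * y)) * u z) := by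
              apply integral_congr_ae; filter_upwards with y
              rw [integral_const_mul]
          _ = ∫ z, ∫ y, v₁ y * ((r * deriv (deriv Q) (r * z + (1 - r) * y)) * u z) :=
              hswap3 r hr
          _ = ∫ z, -∫ y, r * (1 - r) * deriv (deriv (deriv Q)) (r * z + (1 - r) * y)
                * v y * u z := by
              apply integral_congr_ae; filter_upwards with z
              rw [hibp2' r z]
          _ = -∫ z, ∫ y, r * (1 - r) * deriv (deriv (deriv Q)) (r * z + (1 - r) * y)
                * v y * u z := integral_neg _
          _ = -∫ y, ∫ z, r * (1 - r) * deriv (deriv (deriv Q)) (r * z + (1 - r) * y)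
                * v y * u z := by rw [hswap4 r hr]
    _ = -(1 / Real.pi) * ∫ r in Set.Ioc (0:ℝ) 1, ∫ y, ∫ z,
          r * (1 - r) * deriv (deriv (deriv Q)) (r * z + (1 - r) * y) * v y * u z := by
        simp only [mul_neg]
        rw [integral_neg, integral_const_mul, neg_mul]
end
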